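/- Let {X_n} be a sequence of compact metric spaces that is uniformly totally bounded: there is D with diam X_n ≤ D for all n, and for every ε > 0 there is N(ε) such that every X_n has an ε-net of at most N(ε) points. Then there exists a subsequence of {X_n} converging in the Gromov–Hausdorff distance to some compact metric space X. -/
import Mathlib


open Filter Metric

/-- Gromov's precompactness theorem: a uniformly totally bounded sequence of
compact metric spaces (uniformly bounded diameters, and for every `ε > 0` a
common bound `N(ε)` on the cardinality of `ε`-nets) has a subsequence
converging in the Gromov–Hausdorff distance to a compact metric space. -/
theorem gromov_precompactness (X : ℕ → Type) [∀ n, MetricSpace (X n)]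
    [∀ n, CompactSpace (X n)] [∀ n, Nonempty (X n)]
    (D : ℝ) (hD : ∀ n, Metric.diam (Set.univ : Set (X n)) ≤ D)
    (hnet : ∀ ε : ℝ, 0 < ε → ∃ N : ℕ, ∀ n, ∃ A : Finset (X n),
      A.card ≤ N ∧ ∀ x : X n, ∃ a ∈ A, dist x a ≤ ε) :
    ∃ φ : ℕ → ℕ, StrictMono φ ∧
      ∃ (Z : Type) (_ : MetricSpace Z) (_ : CompactSpace Z) (_ : Nonempty Z),
        Tendsto (fun k => GromovHausdorff.ghDist (X (φ k)) Z) atTop (nhds 0) := by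
  classical
  -- the sequence in GH space
  set F : ℕ → GromovHausdorff.GHSpace := fun n => GromovHausdorff.toGHSpace (X n) with hF
  set u : ℕ → ℝ := fun n => 1 / (n + 1) with hu
  have upos : ∀ n, 0 < u n := fun n => by positivity
  have ulim : Tendsto u atTop (nhds 0) := tendsto_one_div_add_atTop_nhds_zero_nat
  set K : ℕ → ℕ := fun n => (hnet (u n / 2) (by positivity)).choose with hK
  have hKspec : ∀ n m, ∃ A : Finset (X m), A.card ≤ K n ∧ ∀ x : X m, ∃ a ∈ A, dist x a ≤ u n / 2 :=
    fun n => (hnet (u n / 2) (by positivity)).choose_spec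
  set t : Set GromovHausdorff.GHSpace := Set.range F with ht
  have htb : TotallyBounded t := by
    apply GromovHausdorff.totallyBounded (u := u) (K := K) (C := D) ulim
    · rintro p ⟨m, rfl⟩
      obtain ⟨e⟩ : Nonempty (X m ≃ᵢ (GromovHausdorff.toGHSpace (X m)).Rep) := by
        rw [← GromovHausdorff.toGHSpace_eq_toGHSpace_iff_isometryEquiv,
          (GromovHausdorff.toGHSpace (X m)).toGHSpace_rep]
      rw [← e.diam_univ]
      exact hD m
    · rintro p ⟨m, rfl⟩ n
      obtain ⟨e⟩ : Nonempty (X m ≃ᵢ (GromovHausdorff.toGHSpace (X m)).Rep) := by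
        rw [← GromovHausdorff.toGHSpace_eq_toGHSpace_iff_isometryEquiv,
          (GromovHausdorff.toGHSpace (X m)).toGHSpace_rep]
      obtain ⟨A, hAcard, hA⟩ := hKspec n m
      refine ⟨e '' (A : Set (X m)), ?_, ?_⟩
      · calc (Cardinal.mk (e '' (A : Set (X m)))) ≤ Cardinal.mk (A : Set (X m)) :=
              Cardinal.mk_image_le
          _ = A.card := by simp
          _ ≤ K n := by exact_mod_cast hAcard
      · intro x _
        obtain ⟨a, haA, ha⟩ := hA (e.symm x)
        refine Set.mem_iUnion₂.2 ⟨e a, Set.mem_image_of_mem _ haA, ?_⟩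
        have : dist x (e a) = dist (e.symm x) a := by
          rw [← e.dist_eq (e.symm x) a, e.apply_symm_apply]
        rw [mem_ball, this]
        calc dist (e.symm x) a ≤ u n / 2 := ha
          _ < u n := by have := upos n; linarith
  have hcl : IsCompact (closure t) := TotallyBounded.isCompact_of_isClosed htb.closure isClosed_closure
  obtain ⟨L, _, φ, hφ, hconv⟩ :=
    hcl.tendsto_subseq (x := F) (fun n => subset_closure ⟨n, rfl⟩)
  refine ⟨φ, hφ, L.Rep, inferInstance, inferInstance, inferInstance, ?_⟩
  have key : ∀ k, GromovHausdorff.ghDist (X (φ k)) L.Rep = dist (F (φ k)) L := by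
    intro k
    rw [GromovHausdorff.ghDist, L.toGHSpace_rep]
  simp only [key]
  simpa [dist_self] using (Tendsto.dist hconv (tendsto_const_nhds : Tendsto (fun _ => L) atTop (nhds L)))
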